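/- Every independent map of forests φ: F → F' factors as φ = φ⁺ ∘ φ⁻ where φ⁻ is a degeneracy (surjective, not collapsing any leaf to an element above ε) and φ⁺ is a face map (injective). This factorization is unique up to unique isomorphism. -/

import Mathlib

universe u

namespace BroadPaper

/-- A broad relation on `X`: a relation between finite unordered tuples
(multisets) over `X` and elements of `X`. -/
abbrev Rel (X : Type u) : Type u := Multiset X → X → Prop

variable {X : Type u} {Y : Type u} {A : Type u} {B : Type u} {Z : Type u}

/-- Broad transitivity: if `f₁ ⋯ fₙ ≤ e` and `g̲ᵢ ≤ fᵢ` then `g̲₁ ⋯ g̲ₙ ≤ e`,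
encoded via a multiset of pairs `(g̲ᵢ, fᵢ)`. -/
def BTrans (r : Rel X) : Prop :=
  ∀ (p : Multiset (Multiset X × X)) (e : X),
    r (p.map Prod.snd) e → (∀ q ∈ p, r q.1 q.2) → r ((p.map Prod.fst).sum) e

/-- A pre-broad poset: reflexivity plus broad transitivity. -/
def IsPreBroad (r : Rel X) : Prop := (∀ e : X, r {e} e) ∧ BTrans r

/-- A (commutative) broad poset: a pre-broad poset satisfying antisymmetry. -/
def IsBroad (r : Rel X) : Prop :=
  IsPreBroad r ∧ ∀ e f : X, r {e} f → r {f} e → e = f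

/-- Simplicity: letters in any broad relation are pairwise distinct. -/
def Simple (r : Rel X) : Prop := ∀ fs e, r fs e → fs.Nodup

/-- The descendant relation `f ≤_d e`. -/
def descends (r : Rel X) (f e : X) : Prop := ∃ fs, r fs e ∧ f ∈ fs

def Comparable (r : Rel X) (f g : X) : Prop := descends r f g ∨ descends r g f

def Incomp (r : Rel X) (f g : X) : Prop := ¬ descends r f g ∧ ¬ descends r g f

/-- Blockwise extension of a broad relation to a relation between tuples:
`fs ≤ es` iff `fs = f̲₁ ⋯ f̲ₖ`, `es = e₁ ⋯ eₖ` with `f̲ᵢ ≤ eᵢ`. -/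
def tupleLE (r : Rel X) (fs es : Multiset X) : Prop :=
  ∃ p : Multiset (Multiset X × X),
    p.map Prod.snd = es ∧ (p.map Prod.fst).sum = fs ∧ ∀ q ∈ p, r q.1 q.2

/-- A leaf: no tuple strictly below `e`. -/
def IsLeaf (r : Rel X) (e : X) : Prop := ¬ ∃ fs, r fs e ∧ fs ≠ ({e} : Multiset X)

/-- `fs` is the maximum tuple strictly below `e` (written `e^↑`).
If `fs ≠ 0`, `e` is a node; if `fs = 0`, `e` is a stump. -/
def upTuple (r : Rel X) (e : X) (fs : Multiset X) : Prop :=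
  (r fs e ∧ fs ≠ ({e} : Multiset X)) ∧
    ∀ gs, r gs e → gs ≠ ({e} : Multiset X) → tupleLE r gs fs

def IsStump (r : Rel X) (e : X) : Prop := upTuple r e 0

/-- A dendroidally ordered set (tree): a finite simple broad poset in which
every element is a leaf, node or stump, with a `≤_d`-maximum (root). -/
def IsTree (r : Rel X) : Prop :=
  IsBroad r ∧ Finite X ∧ Simple r ∧
    (∀ e : X, IsLeaf r e ∨ ∃ fs, upTuple r e fs) ∧
    ∃ rt : X, ∀ e, descends r e rt

def IsMaxEl (r : Rel X) (e : X) : Prop := ∀ s, descends r e s → s = e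

/-- A forestially ordered set (forest): each element has a unique
`≤_d`-maximal element above it. -/
def IsForest (r : Rel X) : Prop :=
  IsBroad r ∧ Finite X ∧ Simple r ∧
    (∀ e : X, IsLeaf r e ∨ ∃ fs, upTuple r e fs) ∧
    ∀ e : X, ∃! rt : X, IsMaxEl r rt ∧ descends r e rt

/-- A map of broad posets: preserves broad relations (letterwise on tuples). -/
def BroadHom (r : Rel X) (r' : Rel Y) (φ : X → Y) : Prop :=
  ∀ fs e, r fs e → r' (fs.map φ) (φ e)

/-- `rs` is the root tuple: the tuple of `≤_d`-maximal elements (no repeats). -/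
def IsRootTuple (r : Rel X) (rs : Multiset X) : Prop :=
  rs.Nodup ∧ ∀ x, x ∈ rs ↔ IsMaxEl r x

/-- Independent map of forests: `φ(r̲_F)·e̲ ≤ r̲_{F'}` for some tuple `e̲`. -/
def Independent (r : Rel X) (r' : Rel Y) (φ : X → Y) : Prop :=
  ∃ (rs : Multiset X) (rs' : Multiset Y) (es : Multiset Y),
    IsRootTuple r rs ∧ IsRootTuple r' rs' ∧ tupleLE r' (rs.map φ + es) rs'

/-- The (pre-)broad relation generated by a set of generating relations:
closure under reflexivity and broad transitivity. -/
inductive GenRel (gen : Rel X) : Rel X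
  | of : ∀ fs e, gen fs e → GenRel gen fs e
  | refl : ∀ e, GenRel gen {e} e
  | btrans : ∀ (p : Multiset (Multiset X × X)) (e : X),
      GenRel gen (p.map Prod.snd) e → (∀ q ∈ p, GenRel gen q.1 q.2) →
      GenRel gen ((p.map Prod.fst).sum) e

/-- Generators of the tensor product `S ⊗ T`: relations `s̲ × t ≤ (s,t)` and
`s × t̲ ≤ (s,t)`. -/
def tensorGen (rS : Rel A) (rT : Rel B) : Rel (A × B) := fun xs x =>
  (∃ as, rS as x.1 ∧ xs = as.map fun a => (a, x.2)) ∨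
  (∃ bs, rT bs x.2 ∧ xs = bs.map fun b => (x.1, b))

/-- The tensor product broad relation on `A × B`. -/
def tensorRel (rS : Rel A) (rT : Rel B) : Rel (A × B) := GenRel (tensorGen rS rT)

/-- Product of tuples: all pairs from `as` and `bs`. -/
def mprod (as : Multiset A) (bs : Multiset B) : Multiset (A × B) :=
  as.bind fun a => bs.map fun b => (a, b)

end BroadPaper

namespace BroadPaper

/-- An isomorphism of broad posets: a broad poset map with a two-sided
inverse that is also a broad poset map. -/
def IsIso {X Y : Type u} (r : Rel X) (r' : Rel Y) (φ : X → Y) : Prop :=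
  BroadHom r r' φ ∧ ∃ ψ : Y → X, BroadHom r' r ψ ∧
    Function.LeftInverse ψ φ ∧ Function.RightInverse ψ φ

/-!
Fibres of an independent map `φ : F → F'` of forests are chains `x₀ < x₁ < ⋯ < xₙ` in which each
`xᵢ₊₁` has up-tuple `xᵢ`: incomparable points of one tree occur together in a tuple, where
simplicity of `F'` keeps them apart, and points of different trees are kept apart by
independence. Hence a relation `f̲ ≤ e` can be moved to any other point `x` of the fibre of `e`
without changing `φ(f̲)`. Consequently the image of `φ`, with the relations `φ(f̲) ≤ φ(e)`, is a
forest, and `F → im φ → F'` is the factorization.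

For uniqueness, let `d : F → G` be a degeneracy. The image relation of `d` is a sub-forest of
`G` with the same roots (by independence of `d`) and the same stumps (no leaf goes to a stump).
Comparing up-tuples from the roots downwards, such a sub-forest is all of `G`. So `G` carries
the image relation of `d`, and `d` has the kernel of `φ`; this pins `G` down up to a unique
isomorphism under `F`.
-/

open Multiset

variable {X Y Z : Type u}

theorem exists_pairing_of_rel {A B : Type*} {R : A → B → Prop} {s : Multiset A}
    {t : Multiset B} (h : Multiset.Rel R s t) :
    ∃ w : Multiset (A × B), w.map Prod.fst = s ∧ w.map Prod.snd = t ∧ ∀ q ∈ w, R q.1 q.2 := by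
  induction h with
  | zero => exact ⟨0, rfl, rfl, by simp⟩
  | @cons a b _ _ hab _ ih =>
    obtain ⟨w, rfl, rfl, hw⟩ := ih
    exact ⟨(a, b) ::ₘ w, by simp, by simp, by simpa [hab] using hw⟩

theorem map_sum_eq (f : X → Y) (S : Multiset (Multiset X)) :
    S.sum.map f = (S.map (Multiset.map f)).sum :=
  map_join f S

section PreBroad

variable {r : Rel X}

theorem rel_subst [DecidableEq X] (hr : IsPreBroad r) {fs gs : Multiset X} {e x : X}
    (hfs : r fs e) (hx : x ∈ fs) (hgs : r gs x) : r (gs + fs.erase x) e := by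
  have h := hr.2 ((gs, x) ::ₘ (fs.erase x).map fun y => ({y}, y)) e
    (by simpa [Function.comp_def, cons_erase hx] using hfs)
    (by
      simp only [mem_cons, mem_map]
      rintro _ (rfl | ⟨y, _, rfl⟩)
      exacts [hgs, hr.1 y])
  simpa [Function.comp_def] using h

theorem rel_subst₂ [DecidableEq X] (hr : IsPreBroad r) {fs s t : Multiset X} {e a b : X}
    (h : r fs e) (ha : a ∈ fs) (hb : b ∈ fs) (hab : a ≠ b) (hs : r s a) (ht : r t b) :
    r (s + t + (fs.erase a).erase b) e := by
  have hb' : b ∈ fs.erase a := (mem_erase_of_ne hab.symm).2 hb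
  have h' := rel_subst hr (rel_subst hr h ha hs) (mem_add.2 (Or.inr hb')) ht
  rwa [erase_add_right_pos _ hb', add_left_comm, ← add_assoc] at h'

theorem rel_of_rel_singleton (hr : IsPreBroad r) {fs : Multiset X} {x e : X}
    (he : r {x} e) (hfs : r fs x) : r fs e := by
  classical
  simpa using rel_subst hr he (mem_singleton_self x) hfs

theorem descends_refl (hr : IsPreBroad r) (e : X) : descends r e e :=
  ⟨{e}, hr.1 e, mem_singleton_self e⟩

theorem descends_trans (hr : IsPreBroad r) {x y z : X}
    (hxy : descends r x y) (hyz : descends r y z) : descends r x z := by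
  classical
  obtain ⟨fs, hfs, hx⟩ := hxy
  obtain ⟨gs, hgs, hy⟩ := hyz
  exact ⟨fs + gs.erase y, rel_subst hr hgs hy hfs, mem_add.2 (Or.inl hx)⟩

theorem tupleLE_refl (hr : IsPreBroad r) (gs : Multiset X) : tupleLE r gs gs :=
  ⟨gs.map fun g => ({g}, g), by simp, by simp,
    by simpa using fun g _ => hr.1 g⟩

theorem exists_mem_of_mem_sum_fst {p : Multiset (Multiset X × X)} {a : X}
    (ha : a ∈ (p.map Prod.fst).sum) : ∃ q ∈ p, a ∈ q.1 :=
  mem_bind.1 ha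

theorem exists_descends_of_tupleLE {gs us : Multiset X} {x : X} (h : tupleLE r gs us)
    (hx : x ∈ gs) : ∃ u ∈ us, descends r x u := by
  obtain ⟨p, rfl, rfl, hp⟩ := h
  obtain ⟨q, hq, hxq⟩ := exists_mem_of_mem_sum_fst hx
  exact ⟨q.2, mem_map_of_mem _ hq, q.1, hp q hq, hxq⟩

theorem rel_of_tupleLE_singleton {fs : Multiset X} {u : X} (h : tupleLE r fs {u}) :
    r fs u := by
  obtain ⟨p, hsnd, rfl, hp⟩ := h
  obtain ⟨q, rfl, rfl⟩ := map_eq_singleton.1 hsnd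
  simpa using hp q (mem_singleton_self q)

theorem rel_zero_of_tupleLE_zero {us : Multiset X} {u : X} (h : tupleLE r 0 us)
    (hu : u ∈ us) : r 0 u := by
  obtain ⟨p, rfl, hfst, hp⟩ := h
  obtain ⟨q, hq, rfl⟩ := mem_map.1 hu
  have hq0 : q.1 = 0 := sum_eq_zero_iff.1 hfst q.1 (mem_map_of_mem _ hq)
  exact hq0 ▸ hp q hq

theorem tupleLE_map {r₂ : Rel Y} {f : X → Y} (hf : BroadHom r r₂ f) {fs us : Multiset X}
    (h : tupleLE r fs us) : tupleLE r₂ (fs.map f) (us.map f) := by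
  obtain ⟨p, rfl, rfl, hp⟩ := h
  refine ⟨p.map fun q => (q.1.map f, f q.2), by simp, by simp [map_sum_eq], ?_⟩
  simp only [mem_map]
  rintro _ ⟨q, hq, rfl⟩
  exact hf _ _ (hp q hq)

theorem BroadHom.map_descends {r₂ : Rel Y} {f : X → Y} (hf : BroadHom r r₂ f) {x e : X}
    (h : descends r x e) : descends r₂ (f x) (f e) := by
  obtain ⟨fs, hfs, hx⟩ := h
  exact ⟨fs.map f, hf _ _ hfs, mem_map_of_mem _ hx⟩

theorem descends_mono {r₂ : Rel X} (hle : ∀ fs e, r fs e → r₂ fs e) {x e : X}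
    (h : descends r x e) : descends r₂ x e :=
  let ⟨fs, hfs, hx⟩ := h
  ⟨fs, hle _ _ hfs, hx⟩

theorem eq_singleton_of_rel_of_mem (hr : IsPreBroad r) (hs : Simple r) {fs : Multiset X}
    {e : X} (h : r fs e) (he : e ∈ fs) : fs = {e} := by
  classical
  by_contra hne
  obtain ⟨a, ha⟩ : ∃ a, a ∈ fs.erase e := exists_mem_of_ne_zero fun h0 => hne <| by
    simpa [h0] using (cons_erase he).symm
  -- substituting `fs` for its own letter `e` duplicates the other letters
  exact disjoint_left.1 (nodup_add.1 (hs _ _ (rel_subst hr h he h))).2.2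
    (mem_of_mem_erase ha) ha

theorem descends_antisymm (hr : IsBroad r) (hs : Simple r) {e f : X}
    (hef : descends r e f) (hfe : descends r f e) : e = f := by
  classical
  obtain ⟨fs, hfs, he⟩ := hef
  obtain ⟨gs, hgs, hf⟩ := hfe
  have h := eq_singleton_of_rel_of_mem hr.1 hs (rel_subst hr.1 hfs he hgs) (mem_add.2 (Or.inl hf))
  have hcard : card gs + card (fs.erase e) = 1 := by simpa using congrArg card h
  have h0 : fs.erase e = 0 := card_eq_zero.1 (by have := card_pos_iff_exists_mem.2 ⟨f, hf⟩; omega)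
  rw [h0, add_zero] at h
  rw [← cons_erase he, h0] at hfs
  exact hr.2 e f hfs (h ▸ hgs)

end PreBroad

section Forest

variable {r : Rel X}

theorem IsForest.isPreBroad (hF : IsForest r) : IsPreBroad r := hF.1.1

theorem IsForest.simple (hF : IsForest r) : Simple r := hF.2.2.1

theorem IsForest.descends_antisymm (hF : IsForest r) {e f : X} (hef : descends r e f)
    (hfe : descends r f e) : e = f :=
  BroadPaper.descends_antisymm hF.1 hF.simple hef hfe

theorem IsForest.exists_root (hF : IsForest r) (x : X) : ∃ ρ, IsMaxEl r ρ ∧ descends r x ρ :=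
  (hF.2.2.2.2 x).exists

theorem IsForest.root_unique (hF : IsForest r) {x ρ ρ' : X} (hρ : IsMaxEl r ρ)
    (hρ' : IsMaxEl r ρ') (hxρ : descends r x ρ) (hxρ' : descends r x ρ') : ρ = ρ' :=
  (hF.2.2.2.2 x).unique ⟨hρ, hxρ⟩ ⟨hρ', hxρ'⟩

theorem IsForest.isLeaf_or_upTuple (hF : IsForest r) (e : X) :
    IsLeaf r e ∨ ∃ us, upTuple r e us :=
  hF.2.2.2.1 e

theorem IsForest.exists_upTuple (hF : IsForest r) {fs : Multiset X} {e : X} (h : r fs e)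
    (hne : fs ≠ {e}) : ∃ us, upTuple r e us :=
  (hF.isLeaf_or_upTuple e).resolve_left fun hl => hl ⟨fs, h, hne⟩

def StrictDescends (r : Rel X) (x e : X) : Prop := descends r x e ∧ x ≠ e

theorem IsForest.wellFounded_strictDescends (hF : IsForest r) :
    WellFounded (StrictDescends r) := by
  have : Finite X := hF.2.1
  have : IsTrans X (StrictDescends r) := ⟨fun x y z hxy hyz =>
    ⟨descends_trans hF.isPreBroad hxy.1 hyz.1, fun hxz =>
      hxy.2 (hF.descends_antisymm hxy.1 (hxz ▸ hyz.1))⟩⟩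
  have : Std.Irrefl (StrictDescends r) := ⟨fun x hx => hx.2 rfl⟩
  exact Finite.wellFounded_of_trans_of_irrefl _

theorem IsForest.strictDescends_of_mem_upTuple (hF : IsForest r) {e u : X} {us : Multiset X}
    (hup : upTuple r e us) (hu : u ∈ us) : StrictDescends r u e :=
  ⟨⟨us, hup.1.1, hu⟩, fun hue => hup.1.2 (eq_singleton_of_rel_of_mem hF.isPreBroad hF.simple
    hup.1.1 (hue ▸ hu))⟩

theorem exists_mem_upTuple_of_strictDescends {e y : X} {us : Multiset X}
    (hup : upTuple r e us) (hy : StrictDescends r y e) : ∃ u ∈ us, descends r y u := by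
  obtain ⟨⟨gs, hgs, hygs⟩, hne⟩ := hy
  refine exists_descends_of_tupleLE (hup.2 gs hgs ?_) hygs
  rintro rfl
  exact hne (mem_singleton.1 hygs)

theorem IsForest.eq_of_descends_of_mem (hF : IsForest r) {fs : Multiset X} {e c c' w : X}
    (h : r fs e) (hc : c ∈ fs) (hc' : c' ∈ fs) (hw : descends r w c) (hw' : descends r w c') :
    c = c' := by
  classical
  by_contra hne
  obtain ⟨s, hs, hws⟩ := hw
  obtain ⟨t, ht, hwt⟩ := hw'
  have hnd := (nodup_add.1 (hF.simple _ _ (rel_subst₂ hF.isPreBroad h hc hc' hne hs ht))).1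
  exact disjoint_left.1 (nodup_add.1 hnd).2.2 hws hwt

theorem IsForest.exists_rel_mem_mem (hF : IsForest r) {e x x' : X} (hxe : descends r x e)
    (hx'e : descends r x' e) (hxx' : ¬ descends r x x') (hx'x : ¬ descends r x' x) :
    ∃ fs, r fs e ∧ x ∈ fs ∧ x' ∈ fs := by
  classical
  induction e using hF.wellFounded_strictDescends.induction with
  | _ e ih =>
  have hxne : x ≠ e := by rintro rfl; exact hx'x hx'e
  have hx'ne : x' ≠ e := by rintro rfl; exact hxx' hxe
  obtain ⟨fs₀, hfs₀, hxfs₀⟩ := hxe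
  obtain ⟨us, hup⟩ := hF.exists_upTuple hfs₀ fun h => hxne (mem_singleton.1 (h ▸ hxfs₀))
  obtain ⟨u, hu, hxu⟩ := exists_mem_upTuple_of_strictDescends hup ⟨⟨fs₀, hfs₀, hxfs₀⟩, hxne⟩
  obtain ⟨u', hu', hx'u'⟩ := exists_mem_upTuple_of_strictDescends hup ⟨hx'e, hx'ne⟩
  by_cases huu' : u = u'
  · subst huu'
    obtain ⟨gs, hgs, hxgs, hx'gs⟩ :=
      ih u (hF.strictDescends_of_mem_upTuple hup hu) hxu hx'u'
    exact ⟨gs + us.erase u, rel_subst hF.isPreBroad hup.1.1 hu hgs,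
      mem_add.2 (Or.inl hxgs), mem_add.2 (Or.inl hx'gs)⟩
  · obtain ⟨s, hs, hxs⟩ := hxu
    obtain ⟨t, ht, hx't⟩ := hx'u'
    exact ⟨_, rel_subst₂ hF.isPreBroad hup.1.1 hu hu' huu' hs ht,
      mem_add.2 (Or.inl (mem_add.2 (Or.inl hxs))), mem_add.2 (Or.inl (mem_add.2 (Or.inr hx't)))⟩

theorem IsForest.rel_of_upTuple_rel (hF : IsForest r) {s : Rel X} (hs : IsPreBroad s)
    (hup : ∀ e us, upTuple r e us → s us e) {fs : Multiset X} {e : X} (h : r fs e) :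
    s fs e := by
  induction e using hF.wellFounded_strictDescends.induction generalizing fs with
  | _ e ih =>
  by_cases hfe : fs = {e}
  · exact hfe ▸ hs.1 e
  obtain ⟨us, hus⟩ := hF.exists_upTuple h hfe
  obtain ⟨p, hsnd, rfl, hp⟩ := hus.2 fs h hfe
  refine hs.2 p e (hsnd ▸ hup e us hus) fun q hq => ?_
  exact ih q.2 (hF.strictDescends_of_mem_upTuple hus (hsnd ▸ mem_map_of_mem _ hq)) (hp q hq)

theorem IsForest.rel_zero_of_descends (hF : IsForest r) {v y : X} (h0 : r 0 v)
    (hyv : descends r y v) : r 0 y := by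
  induction v using hF.wellFounded_strictDescends.induction with
  | _ v ih =>
  by_cases hy : y = v
  · exact hy ▸ h0
  obtain ⟨us, hus⟩ := hF.exists_upTuple h0 (by simp)
  obtain ⟨u, hu, hyu⟩ := exists_mem_upTuple_of_strictDescends hus ⟨hyv, hy⟩
  exact ih u (hF.strictDescends_of_mem_upTuple hus hu)
    (rel_zero_of_tupleLE_zero (hus.2 0 h0 (by simp)) hu) hyu

end Forest

section RootTuple

variable {r : Rel X}

theorem IsForest.nodup_of_tupleLE_rootTuple (hF : IsForest r) {rs gs : Multiset X}
    (hrs : IsRootTuple r rs) (h : tupleLE r gs rs) : gs.Nodup := by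
  obtain ⟨p, hsnd, rfl, hp⟩ := h
  have hsnd' : (p.map Prod.snd).Nodup := hsnd ▸ hrs.1
  have hmax : ∀ q ∈ p, IsMaxEl r q.2 := fun q hq => (hrs.2 q.2).1 (hsnd ▸ mem_map_of_mem _ hq)
  refine nodup_bind.2 ⟨fun q hq => hF.simple _ _ (hp q hq), (hsnd'.of_map _).pairwise ?_⟩
  intro q hq q' hq' hne
  refine disjoint_left.2 fun {a} ha ha' => hne (inj_on_of_nodup_map hsnd' q hq q' hq' ?_)
  exact hF.root_unique (hmax q hq) (hmax q' hq') ⟨q.1, hp q hq, ha⟩ ⟨q'.1, hp q' hq', ha'⟩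

theorem IsForest.exists_rel_mem_mem_of_tupleLE_rootTuple (hF : IsForest r)
    {rs gs : Multiset X} (hrs : IsRootTuple r rs) (h : tupleLE r gs rs) {a b w : X}
    (ha : a ∈ gs) (hb : b ∈ gs) (hwa : descends r w a) (hwb : descends r w b) :
    ∃ fs e, r fs e ∧ a ∈ fs ∧ b ∈ fs := by
  obtain ⟨p, hsnd, rfl, hp⟩ := h
  have hmax : ∀ q ∈ p, IsMaxEl r q.2 := fun q hq => (hrs.2 q.2).1 (hsnd ▸ mem_map_of_mem _ hq)
  obtain ⟨q, hq, haq⟩ := exists_mem_of_mem_sum_fst ha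
  obtain ⟨q', hq', hbq'⟩ := exists_mem_of_mem_sum_fst hb
  have hpb := hF.isPreBroad
  have heq : q.2 = q'.2 := hF.root_unique (hmax q hq) (hmax q' hq')
    (descends_trans hpb hwa ⟨q.1, hp q hq, haq⟩) (descends_trans hpb hwb ⟨q'.1, hp q' hq', hbq'⟩)
  obtain rfl := inj_on_of_nodup_map (hsnd ▸ hrs.1) q hq q' hq' heq
  exact ⟨q.1, q.2, hp q hq, haq, hbq'⟩

end RootTuple

section Map

variable {r : Rel X} {r' : Rel Y} {φ : X → Y}

theorem eq_singleton_of_mem_of_map_eq (hF' : IsForest r') (hhom : BroadHom r r' φ)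
    {fs : Multiset X} {x e : X} (h : r fs e) (hx : x ∈ fs) (he : φ x = φ e) : fs = {x} := by
  have h' := eq_singleton_of_rel_of_mem hF'.isPreBroad hF'.simple (hhom _ _ h)
    (he ▸ mem_map_of_mem φ hx)
  obtain ⟨y, rfl, -⟩ := map_eq_singleton.1 h'
  rw [mem_singleton.1 hx]

theorem rel_singleton_of_map_eq (hF' : IsForest r') (hhom : BroadHom r r' φ) {x e : X}
    (hxe : descends r x e) (he : φ x = φ e) : r {x} e := by
  obtain ⟨fs, hfs, hx⟩ := hxe
  exact eq_singleton_of_mem_of_map_eq hF' hhom hfs hx he ▸ hfs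

theorem map_eq_of_descends_of_descends (hF' : IsForest r') (hhom : BroadHom r r' φ) {x u e : X}
    (hxu : descends r x u) (hue : descends r u e) (he : φ x = φ e) : φ u = φ e :=
  hF'.descends_antisymm (hhom.map_descends hue) (he ▸ hhom.map_descends hxu)

end Map

structure IsIndepForestMap (r : Rel X) (r' : Rel Y) (φ : X → Y) : Prop where
  forest : IsForest r
  forest' : IsForest r'
  hom : BroadHom r r' φ
  independent : Independent r r' φ

namespace IsIndepForestMap

variable {r : Rel X} {r' : Rel Y} {φ : X → Y} (hφ : IsIndepForestMap r r' φ)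
include hφ

theorem injOn_isMaxEl {a b : X} (ha : IsMaxEl r a) (hb : IsMaxEl r b) (hab : φ a = φ b) :
    a = b := by
  obtain ⟨rs, rs', es, hrs, hrs', hle⟩ := hφ.independent
  have hnd := (nodup_add.1 (hφ.forest'.nodup_of_tupleLE_rootTuple hrs' hle)).1
  exact inj_on_of_nodup_map hnd a ((hrs.2 a).2 ha) b ((hrs.2 b).2 hb) hab

theorem comparable_of_map_eq {x x' : X} (he : φ x = φ x') :
    descends r x x' ∨ descends r x' x := by
  by_contra! hc
  have hF := hφ.forest
  obtain ⟨ρ, hρ, hxρ⟩ := hF.exists_root x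
  obtain ⟨ρ', hρ', hx'ρ'⟩ := hF.exists_root x'
  by_cases hρρ' : ρ = ρ'
  · subst hρρ'
    obtain ⟨fs, hfs, hxfs, hx'fs⟩ := hF.exists_rel_mem_mem hxρ hx'ρ' hc.1 hc.2
    obtain rfl := inj_on_of_nodup_map (hφ.forest'.simple _ _ (hφ.hom _ _ hfs)) x hxfs x' hx'fs he
    exact hc.1 (descends_refl hF.isPreBroad x)
  -- `φ ρ` and `φ ρ'` lie in one block of the independence witness, both above `φ x`
  obtain ⟨rs, rs', es, hrs, hrs', hle⟩ := hφ.independent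
  have hmem : ∀ {a}, IsMaxEl r a → φ a ∈ rs.map φ + es := fun ha =>
    mem_add.2 (Or.inl (mem_map_of_mem _ ((hrs.2 _).2 ha)))
  have hxρ₁ := hφ.hom.map_descends hxρ
  have hxρ₂ : descends r' (φ x) (φ ρ') := he ▸ hφ.hom.map_descends hx'ρ'
  obtain ⟨fs, e, hfs, hρfs, hρ'fs⟩ := hφ.forest'.exists_rel_mem_mem_of_tupleLE_rootTuple hrs' hle
    (hmem hρ) (hmem hρ') hxρ₁ hxρ₂
  exact hρρ' (hφ.injOn_isMaxEl hρ hρ'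
    (hφ.forest'.eq_of_descends_of_mem hfs hρfs hρ'fs hxρ₁ hxρ₂))

theorem exists_fiber_min (x : X) :
    ∃ x₀, φ x₀ = φ x ∧ ∀ x', φ x' = φ x₀ → descends r x₀ x' := by
  obtain ⟨x₀, hx₀, hmin⟩ :=
    hφ.forest.wellFounded_strictDescends.has_min {x' | φ x' = φ x} ⟨x, rfl⟩
  refine ⟨x₀, hx₀, fun x' hx' => ?_⟩
  rcases hφ.comparable_of_map_eq hx'.symm with h | h
  · exact h
  by_cases heq : x' = x₀
  · exact heq ▸ descends_refl hφ.forest.isPreBroad x'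
  · exact absurd ⟨h, heq⟩ (hmin x' (hx'.trans hx₀))

theorem descends_of_map_eq_of_isMaxEl {x y ρ : X} (hxy : φ x = φ y) (hρ : IsMaxEl r ρ)
    (hxρ : descends r x ρ) : descends r y ρ := by
  have hF := hφ.forest
  rcases hφ.comparable_of_map_eq hxy with h | h
  · obtain ⟨σ, hσ, hyσ⟩ := hF.exists_root y
    rwa [hF.root_unique hρ hσ hxρ (descends_trans hF.isPreBroad h hyσ)]
  · exact descends_trans hF.isPreBroad h hxρ

theorem exists_upTuple_singleton_of_map_eq {x' x : X} (hx' : StrictDescends r x' x)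
    (he : φ x' = φ x) : ∃ u, upTuple r x {u} ∧ descends r x' u ∧ φ u = φ x := by
  have hF := hφ.forest
  obtain ⟨us, hus⟩ := hF.exists_upTuple (rel_singleton_of_map_eq hφ.forest' hφ.hom hx'.1 he)
    (by simpa using hx'.2)
  obtain ⟨u, hu, hx'u⟩ := exists_mem_upTuple_of_strictDescends hus hx'
  have hφu : φ u = φ x := map_eq_of_descends_of_descends hφ.forest' hφ.hom hx'u
    (hF.strictDescends_of_mem_upTuple hus hu).1 he
  exact ⟨u, eq_singleton_of_mem_of_map_eq hφ.forest' hφ.hom hus.1.1 hu hφu ▸ hus, hx'u, hφu⟩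

theorem rel_or_eq_singleton_of_map_eq {x' x : X} {fs : Multiset X} (hx' : descends r x' x)
    (he : φ x' = φ x) (h : r fs x) : r fs x' ∨ ∃ y, fs = {y} ∧ φ y = φ x := by
  induction x using hφ.forest.wellFounded_strictDescends.induction with
  | _ x ih =>
  by_cases hxx : x' = x
  · exact Or.inl (hxx ▸ h)
  obtain ⟨u, hus, hx'u, hφu⟩ := hφ.exists_upTuple_singleton_of_map_eq ⟨hx', hxx⟩ he
  by_cases hfs : fs = {x}
  · exact Or.inr ⟨x, hfs, rfl⟩
  rcases ih u (hφ.forest.strictDescends_of_mem_upTuple hus (mem_singleton_self u)) hx'u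
    (he.trans hφu.symm) (rel_of_tupleLE_singleton (hus.2 fs h hfs)) with h' | ⟨y, rfl, hy⟩
  · exact Or.inl h'
  · exact Or.inr ⟨y, rfl, hy.trans hφu⟩

end IsIndepForestMap

section Image

variable {r : Rel X}

def imageRel (r : Rel X) (d : X → Z) : Rel Z := fun zs z =>
  ∃ fs e, r fs e ∧ fs.map d = zs ∧ d e = z

theorem broadHom_imageRel (d : X → Z) : BroadHom r (imageRel r d) d :=
  fun fs e h => ⟨fs, e, h, rfl, rfl⟩

theorem broadHom_imageRel_of_comp {r₂ : Rel Y} {d : X → Z} {f : X → Y} {θ : Z → Y}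
    (hθ : ∀ x, θ (d x) = f x) (hf : BroadHom r r₂ f) : BroadHom (imageRel r d) r₂ θ := by
  rintro _ _ ⟨fs, e, hfs, rfl, rfl⟩
  simpa [Function.comp_def, hθ] using hf fs e hfs

theorem exists_of_descends_imageRel {d : X → Z} {z z' : Z} (h : descends (imageRel r d) z z') :
    ∃ x y, d x = z ∧ d y = z' ∧ descends r x y := by
  obtain ⟨_, ⟨fs, e, hfs, rfl, rfl⟩, hz⟩ := h
  obtain ⟨x, hx, rfl⟩ := mem_map.1 hz
  exact ⟨x, e, rfl, rfl, fs, hfs, hx⟩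

namespace IsIndepForestMap

variable {r' : Rel Y} {φ : X → Y} (hφ : IsIndepForestMap r r' φ) {d : X → Z}
  (hker : ∀ x x', d x = d x' ↔ φ x = φ x')
include hφ hker

theorem exists_rel_of_imageRel {zs : Multiset Z} {x : X} (h : imageRel r d zs (d x)) :
    ∃ fs, r fs x ∧ fs.map d = zs := by
  obtain ⟨fs, e, hfs, rfl, hex⟩ := h
  have he : φ e = φ x := (hker e x).1 hex
  rcases hφ.comparable_of_map_eq he with hex' | hxe
  · exact ⟨fs, rel_of_rel_singleton hφ.forest.isPreBroad
      (rel_singleton_of_map_eq hφ.forest' hφ.hom hex' he) hfs, rfl⟩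
  rcases hφ.rel_or_eq_singleton_of_map_eq hxe he.symm hfs with h' | ⟨y, rfl, hy⟩
  · exact ⟨fs, h', rfl⟩
  · exact ⟨{x}, hφ.forest.isPreBroad.1 x, by simp [(hker x y).2 (he.symm.trans hy.symm)]⟩

theorem exists_fiber_min_of_ker (x : X) :
    ∃ x₀, d x₀ = d x ∧ ∀ x', d x' = d x₀ → descends r x₀ x' := by
  obtain ⟨x₀, hx₀, hmin⟩ := hφ.exists_fiber_min x
  exact ⟨x₀, (hker _ _).2 hx₀, fun x' hx' => hmin x' ((hker _ _).1 hx')⟩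

theorem simple_imageRel : Simple (imageRel r d) := by
  rintro _ _ ⟨fs, e, hfs, rfl, rfl⟩
  have hF := hφ.forest
  refine (hF.simple _ _ hfs).map_on fun x hx x' hx' hxx' => ?_
  rcases hφ.comparable_of_map_eq ((hker x x').1 hxx') with h | h
  · exact hF.eq_of_descends_of_mem hfs hx hx' (descends_refl hF.isPreBroad x) h
  · exact (hF.eq_of_descends_of_mem hfs hx' hx (descends_refl hF.isPreBroad x') h).symm

theorem upTuple_imageRel {x₀ : X} (hmin : ∀ x', d x' = d x₀ → descends r x₀ x')
    {us : Multiset X} (hup : upTuple r x₀ us) : upTuple (imageRel r d) (d x₀) (us.map d) := by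
  have hF := hφ.forest
  have hne : us.map d ≠ {d x₀} := by
    intro h
    obtain ⟨u, rfl, hu⟩ := map_eq_singleton.1 h
    have hux₀ := hF.strictDescends_of_mem_upTuple hup (mem_singleton_self u)
    exact hux₀.2 (hF.descends_antisymm hux₀.1 (hmin u hu))
  refine ⟨⟨broadHom_imageRel d _ _ hup.1.1, hne⟩, fun gs hgs hgne => ?_⟩
  obtain ⟨fs, hfs, rfl⟩ := hφ.exists_rel_of_imageRel hker hgs
  exact tupleLE_map (broadHom_imageRel d) (hup.2 fs hfs (by rintro rfl; exact hgne (by simp)))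

theorem isLeaf_imageRel {x : X} (hl : IsLeaf r x) : IsLeaf (imageRel r d) (d x) := by
  rintro ⟨gs, hgs, hne⟩
  obtain ⟨fs, hfs, rfl⟩ := hφ.exists_rel_of_imageRel hker hgs
  exact hl ⟨fs, hfs, by rintro rfl; exact hne (by simp)⟩

theorem not_imageRel_zero_of_isLeaf {l : X} (hl : IsLeaf r l) : ¬ imageRel r d 0 (d l) := by
  intro h
  obtain ⟨fs, hfs, hmap⟩ := hφ.exists_rel_of_imageRel hker h
  obtain rfl := map_eq_zero.1 hmap
  exact hl ⟨0, hfs, by simp⟩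

variable (hds : Function.Surjective d)
include hds

theorem isPreBroad_imageRel : IsPreBroad (imageRel r d) := by
  have hpb := hφ.forest.isPreBroad
  refine ⟨fun z => ?_, fun p z h hp => ?_⟩
  · obtain ⟨x, rfl⟩ := hds z
    simpa using broadHom_imageRel d _ _ (hpb.1 x)
  obtain ⟨fs, x, hfs, hmap, rfl⟩ := h
  obtain ⟨w, rfl, rfl, hw⟩ := exists_pairing_of_rel (rel_map.1 (rel_eq.2 hmap))
  -- lift each relation of `p` to the letter of `fs` that sits under it
  choose! g hg using fun q (hq : q ∈ w) =>
    hφ.exists_rel_of_imageRel hker ((hw q hq).symm ▸ hp q.2 (mem_map_of_mem _ hq))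
  refine ⟨(w.map g).sum, x, ?_, ?_, rfl⟩
  · simpa [Function.comp_def] using hpb.2 (w.map fun q => (g q, q.1)) x (by simpa using hfs)
      (by simp only [mem_map]; rintro _ ⟨q, hq, rfl⟩; exact (hg q hq).1)
  · simp only [map_sum_eq, map_map]
    exact congrArg sum (map_congr rfl fun q hq => (hg q hq).2)

theorem isBroad_imageRel : IsBroad (imageRel r d) := by
  refine ⟨hφ.isPreBroad_imageRel hker hds, fun z z' h h' => ?_⟩
  obtain ⟨b, rfl⟩ := hds z'
  obtain ⟨x₀, hx₀, hmin⟩ := hφ.exists_fiber_min_of_ker hker b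
  rw [← hx₀] at h h' ⊢
  obtain ⟨fs, hfs, hmap⟩ := hφ.exists_rel_of_imageRel hker h
  obtain ⟨x, rfl, rfl⟩ := map_eq_singleton.1 hmap
  obtain ⟨gs, hgs, hmap'⟩ := hφ.exists_rel_of_imageRel hker h'
  obtain ⟨y, rfl, hy⟩ := map_eq_singleton.1 hmap'
  -- `x₀ ≤ y ≤ x ≤ x₀` in `r`
  exact congrArg d (hφ.forest.descends_antisymm ⟨{x}, hfs, mem_singleton_self x⟩
    (descends_trans hφ.forest.isPreBroad (hmin y hy) ⟨{y}, hgs, mem_singleton_self y⟩))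

theorem isMaxEl_imageRel {ρ : X} (hρ : IsMaxEl r ρ) : IsMaxEl (imageRel r d) (d ρ) := by
  intro s hs
  have hF := hφ.forest
  obtain ⟨x, y, hx, rfl, hxy⟩ := exists_of_descends_imageRel hs
  obtain ⟨σ, hσ, hyσ⟩ := hF.exists_root y
  have hxρ := hφ.descends_of_map_eq_of_isMaxEl ((hker ρ x).1 hx.symm) hρ
    (descends_refl hF.isPreBroad ρ)
  obtain rfl := hF.root_unique hρ hσ hxρ (descends_trans hF.isPreBroad hxy hyσ)
  exact descends_antisymm (hφ.isBroad_imageRel hker hds) (hφ.simple_imageRel hker)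
    ((broadHom_imageRel d).map_descends hyσ) hs

theorem isMaxEl_imageRel_iff {s : Z} :
    IsMaxEl (imageRel r d) s ↔ ∃ ρ, IsMaxEl r ρ ∧ d ρ = s := by
  refine ⟨fun hs => ?_, fun ⟨ρ, hρ, hρs⟩ => hρs ▸ hφ.isMaxEl_imageRel hker hds hρ⟩
  obtain ⟨x, rfl⟩ := hds s
  obtain ⟨ρ, hρ, hxρ⟩ := hφ.forest.exists_root x
  exact ⟨ρ, hρ, hs _ ((broadHom_imageRel d).map_descends hxρ)⟩

theorem existsUnique_root_imageRel (z : Z) :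
    ∃! ρ, IsMaxEl (imageRel r d) ρ ∧ descends (imageRel r d) z ρ := by
  have hF := hφ.forest
  obtain ⟨x, rfl⟩ := hds z
  obtain ⟨ρ, hρ, hxρ⟩ := hF.exists_root x
  refine ⟨d ρ, ⟨hφ.isMaxEl_imageRel hker hds hρ, (broadHom_imageRel d).map_descends hxρ⟩, ?_⟩
  rintro _ ⟨hmax, hle⟩
  obtain ⟨σ, hσ, rfl⟩ := (hφ.isMaxEl_imageRel_iff hker hds).1 hmax
  obtain ⟨y, b, hy, hb, hyb⟩ := exists_of_descends_imageRel hle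
  have hbσ := hφ.descends_of_map_eq_of_isMaxEl ((hker σ b).1 hb.symm) hσ
    (descends_refl hF.isPreBroad σ)
  have hxσ := hφ.descends_of_map_eq_of_isMaxEl ((hker y x).1 hy) hσ
    (descends_trans hF.isPreBroad hyb hbσ)
  rw [hF.root_unique hσ hρ hxσ hxρ]

theorem isForest_imageRel : IsForest (imageRel r d) := by
  have : Finite X := hφ.forest.2.1
  refine ⟨hφ.isBroad_imageRel hker hds, Finite.of_surjective d hds, hφ.simple_imageRel hker,
    fun z => ?_, hφ.existsUnique_root_imageRel hker hds⟩
  obtain ⟨x, rfl⟩ := hds z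
  obtain ⟨x₀, hx₀, hmin⟩ := hφ.exists_fiber_min_of_ker hker x
  rw [← hx₀]
  rcases hφ.forest.isLeaf_or_upTuple x₀ with hl | ⟨us, hup⟩
  · exact Or.inl (hφ.isLeaf_imageRel hker hl)
  · exact Or.inr ⟨_, hφ.upTuple_imageRel hker hmin hup⟩

theorem isRootTuple_imageRel {rs : Multiset X} (hrs : IsRootTuple r rs) :
    IsRootTuple (imageRel r d) (rs.map d) := by
  refine ⟨hrs.1.map_on fun a ha b hb hab => ?_, fun z => ?_⟩
  · exact hφ.injOn_isMaxEl ((hrs.2 a).1 ha) ((hrs.2 b).1 hb) ((hker a b).1 hab)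
  · simp only [mem_map, hrs.2, hφ.isMaxEl_imageRel_iff hker hds]

theorem independent_imageRel : Independent r (imageRel r d) d := by
  obtain ⟨rs, -, -, hrs, -, -⟩ := hφ.independent
  exact ⟨rs, rs.map d, 0, hrs, hφ.isRootTuple_imageRel hker hds hrs,
    by simpa using tupleLE_refl (hφ.isPreBroad_imageRel hker hds) _⟩

theorem independent_of_imageRel {m : Z → Y} (hm : ∀ x, m (d x) = φ x) :
    Independent (imageRel r d) r' m := by
  obtain ⟨rs, rs', es, hrs, hrs', hle⟩ := hφ.independent
  exact ⟨rs.map d, rs', es, hφ.isRootTuple_imageRel hker hds hrs, hrs',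
    by simpa [Function.comp_def, hm] using hle⟩

end IsIndepForestMap

end Image

section Subforest

variable {R S : Rel Z} (hR : IsForest R) (hS : IsForest S) (hle : ∀ zs z, R zs z → S zs z)
include hR hS hle

theorem upTuple_eq_of_subforest {z : Z} (hD : ∀ y, descends S y z → descends R y z)
    {vs ws : Multiset Z} (hvs : upTuple S z vs) (hws : upTuple R z ws) : vs = ws := by
  have hdesc : ∀ {y t}, descends R y t → descends S y t := descends_mono hle
  have hvw : ∀ v ∈ vs, ∃ w ∈ ws, descends R v w := fun v hv =>
    have hvz := hS.strictDescends_of_mem_upTuple hvs hv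
    exists_mem_upTuple_of_strictDescends hws ⟨hD v hvz.1, hvz.2⟩
  have hwv : ∀ w ∈ ws, ∃ v ∈ vs, descends S w v := fun w hw =>
    have hwz := hR.strictDescends_of_mem_upTuple hws hw
    exists_mem_upTuple_of_strictDescends hvs ⟨hdesc hwz.1, hwz.2⟩
  have hsub : ∀ v ∈ vs, v ∈ ws := by
    intro v hv
    obtain ⟨w, hw, hvw⟩ := hvw v hv
    obtain ⟨v', hv', hwv'⟩ := hwv w hw
    obtain rfl : v = v' := hS.eq_of_descends_of_mem hvs.1.1 hv hv'
      (descends_refl hS.isPreBroad v) (descends_trans hS.isPreBroad (hdesc hvw) hwv')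
    rwa [hS.descends_antisymm (hdesc hvw) hwv']
  refine (Nodup.ext (hS.simple _ _ hvs.1.1) (hR.simple _ _ hws.1.1)).2 fun a =>
    ⟨hsub a, fun ha => ?_⟩
  obtain ⟨v, hv, hav⟩ := hwv a ha
  rwa [hS.eq_of_descends_of_mem (hle _ _ hws.1.1) ha (hsub v hv) (descends_refl hS.isPreBroad a)
    hav]

theorem rel_upTuple_of_subforest {z : Z} (hstump : S 0 z → R 0 z)
    (hD : ∀ y, descends S y z → descends R y z) {vs : Multiset Z} (hvs : upTuple S z vs) :
    R vs z ∧ ∀ v ∈ vs, ∀ y, descends S y v → descends R y v := by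
  obtain hl | ⟨ws, hws⟩ := hR.isLeaf_or_upTuple z
  · exfalso
    obtain rfl | ⟨v, hv⟩ := empty_or_exists_mem vs
    · exact hl ⟨0, hstump hvs.1.1, by simp⟩
    have hvz := hS.strictDescends_of_mem_upTuple hvs hv
    obtain ⟨gs, hgs, hvgs⟩ := hD v hvz.1
    exact hl ⟨gs, hgs, fun h => hvz.2 (mem_singleton.1 (h ▸ hvgs))⟩
  obtain rfl := upTuple_eq_of_subforest hR hS hle hD hvs hws
  refine ⟨hws.1.1, fun v hv y hyv => ?_⟩
  have hvz := hS.strictDescends_of_mem_upTuple hvs hv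
  have hyne : y ≠ z := fun h => hvz.2 (hS.descends_antisymm hvz.1 (h ▸ hyv))
  obtain ⟨w, hw, hyw⟩ := exists_mem_upTuple_of_strictDescends hws
    ⟨hD y (descends_trans hS.isPreBroad hyv hvz.1), hyne⟩
  rwa [hS.eq_of_descends_of_mem hvs.1.1 hv hw hyv (descends_mono hle hyw)]

theorem descends_of_isMaxEl_of_subforest (hmax : ∀ s, IsMaxEl R s → IsMaxEl S s) {ρ y : Z}
    (hρ : IsMaxEl S ρ) (hy : descends S y ρ) : descends R y ρ := by
  obtain ⟨σ, hσ, hyσ⟩ := hR.exists_root y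
  rwa [hS.root_unique hρ (hmax σ hσ) hy (descends_mono hle hyσ)]

theorem descends_of_subforest (hmax : ∀ s, IsMaxEl R s → IsMaxEl S s) (hstump : ∀ z, S 0 z → R 0 z)
    {y z : Z} (h : descends S y z) : descends R y z := by
  obtain ⟨ρ, hρ, hzρ⟩ := hS.exists_root z
  -- the descendants in `S` and in `R` agree below a root, hence, going down, below every element
  suffices hdown : ∀ t, (∀ y, descends S y t → descends R y t) →
      ∀ z, descends S z t → ∀ y, descends S y z → descends R y z from
    hdown ρ (fun y => descends_of_isMaxEl_of_subforest hR hS hle hmax hρ) z hzρ y h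
  intro t
  induction t using hS.wellFounded_strictDescends.induction with
  | _ t ih =>
  intro hD z hzt
  by_cases hzt' : z = t
  · exact hzt' ▸ hD
  obtain ⟨gs, hgs, hzgs⟩ := hzt
  obtain ⟨vs, hvs⟩ := hS.exists_upTuple hgs fun h => hzt' (mem_singleton.1 (h ▸ hzgs))
  obtain ⟨v, hv, hzv⟩ := exists_mem_upTuple_of_strictDescends hvs ⟨⟨gs, hgs, hzgs⟩, hzt'⟩
  exact ih v (hS.strictDescends_of_mem_upTuple hvs hv)
    ((rel_upTuple_of_subforest hR hS hle (hstump t) hD hvs).2 v hv) z hzv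

theorem rel_of_subforest (hmax : ∀ s, IsMaxEl R s → IsMaxEl S s) (hstump : ∀ z, S 0 z → R 0 z)
    {zs : Multiset Z} {z : Z} (h : S zs z) : R zs z :=
  hS.rel_of_upTuple_rel hR.isPreBroad (fun e _ hup => (rel_upTuple_of_subforest hR hS hle (hstump e)
    (fun _ => descends_of_subforest hR hS hle hmax hstump) hup).1) h

end Subforest

section Degeneracy

variable {r : Rel X} {rz : Rel Z} {d : X → Z}

theorem BroadHom.rel_of_imageRel (hd : BroadHom r rz d) {zs : Multiset Z} {z : Z}
    (h : imageRel r d zs z) : rz zs z := by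
  obtain ⟨fs, e, hfs, rfl, rfl⟩ := h
  exact hd fs e hfs

theorem IsForest.rel_zero_of_rel_zero_map (hF : IsForest r) (hFz : IsForest rz)
    (hd : BroadHom r rz d) (hleaf : ∀ l, IsLeaf r l → ¬ rz 0 (d l)) {x : X}
    (h0 : rz 0 (d x)) : r 0 x := by
  induction x using hF.wellFounded_strictDescends.induction with
  | _ x ih =>
  obtain hl | ⟨us, hus⟩ := hF.isLeaf_or_upTuple x
  · exact absurd h0 (hleaf x hl)
  have hu : ∀ u ∈ us, r 0 u := fun u hu => ih u (hF.strictDescends_of_mem_upTuple hus hu)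
    (hFz.rel_zero_of_descends h0 (hd.map_descends ⟨us, hus.1.1, hu⟩))
  simpa using hF.isPreBroad.2 (us.map fun u => (0, u)) x (by simpa using hus.1.1)
    (by simpa using hu)

namespace IsIndepForestMap

variable (hd : IsIndepForestMap r rz d) (hds : Function.Surjective d)
include hd hds

theorem isMaxEl_of_isMaxEl_imageRel {s : Z} (hs : IsMaxEl (imageRel r d) s) : IsMaxEl rz s := by
  have hker : ∀ x x', d x = d x' ↔ d x = d x' := fun _ _ => Iff.rfl
  obtain ⟨ρ, hρ, rfl⟩ := (hd.isMaxEl_imageRel_iff hker hds).1 hs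
  obtain ⟨σ, hσ, hρσ⟩ := hd.forest'.exists_root (d ρ)
  obtain ⟨ρ', hρ', rfl⟩ := (hd.isMaxEl_imageRel_iff hker hds).1
    fun t ht => hσ t (descends_mono (fun _ _ => hd.hom.rel_of_imageRel) ht)
  suffices d ρ = d ρ' from this ▸ hσ
  -- `d ρ` and `d ρ'` lie in one block of the independence witness of `d`; its target is `d ρ'`
  obtain ⟨rs, rsz, es, hrs, hrsz, hle⟩ := hd.independent
  have hmem : ∀ {a}, IsMaxEl r a → d a ∈ rs.map d + es := fun ha =>
    mem_add.2 (Or.inl (mem_map_of_mem _ ((hrs.2 _).2 ha)))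
  obtain ⟨fs, e, hfs, hρfs, hρ'fs⟩ := hd.forest'.exists_rel_mem_mem_of_tupleLE_rootTuple hrsz hle
    (hmem hρ) (hmem hρ') (descends_refl hd.forest'.isPreBroad _) hρσ
  obtain rfl := hσ e ⟨fs, hfs, hρ'fs⟩
  exact mem_singleton.1 (eq_singleton_of_rel_of_mem hd.forest'.isPreBroad hd.forest'.simple
    hfs hρ'fs ▸ hρfs)

theorem rel_iff_imageRel (hleaf : ∀ l, IsLeaf r l → ¬ rz 0 (d l)) {zs : Multiset Z} {z : Z} :
    rz zs z ↔ imageRel r d zs z := by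
  refine ⟨rel_of_subforest (hd.isForest_imageRel (fun _ _ => Iff.rfl) hds) hd.forest'
    (fun _ _ => hd.hom.rel_of_imageRel) (fun _ => hd.isMaxEl_of_isMaxEl_imageRel hds)
    (fun z h0 => ?_), hd.hom.rel_of_imageRel⟩
  obtain ⟨x, rfl⟩ := hds z
  exact ⟨0, x, hd.forest.rel_zero_of_rel_zero_map hd.forest' hd.hom hleaf h0, rfl, rfl⟩

end IsIndepForestMap

end Degeneracy

theorem existsUnique_isIso_of_imageRel {r : Rel X} {Z₁ Z₂ : Type u} {rz₁ : Rel Z₁}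
    {rz₂ : Rel Z₂} {d₁ : X → Z₁} {d₂ : X → Z₂} (h₁ : ∀ zs z, rz₁ zs z ↔ imageRel r d₁ zs z)
    (h₂ : ∀ zs z, rz₂ zs z ↔ imageRel r d₂ zs z) (hd₁ : Function.Surjective d₁)
    (hd₂ : Function.Surjective d₂) (hker : ∀ x x', d₁ x = d₁ x' ↔ d₂ x = d₂ x') :
    ∃! θ : Z₁ → Z₂, IsIso rz₁ rz₂ θ ∧ θ ∘ d₁ = d₂ := by
  let θ : Z₁ → Z₂ := fun z => d₂ (Function.surjInv hd₁ z)
  let ψ : Z₂ → Z₁ := fun z => d₁ (Function.surjInv hd₂ z)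
  have hθ : ∀ x, θ (d₁ x) = d₂ x := fun x => (hker _ _).1 (Function.surjInv_eq hd₁ (d₁ x))
  have hψ : ∀ x, ψ (d₂ x) = d₁ x := fun x => (hker _ _).2 (Function.surjInv_eq hd₂ (d₂ x))
  have hθhom : BroadHom rz₁ rz₂ θ := fun zs z h =>
    (h₂ _ _).2 (broadHom_imageRel_of_comp hθ (broadHom_imageRel d₂) zs z ((h₁ _ _).1 h))
  have hψhom : BroadHom rz₂ rz₁ ψ := fun zs z h =>
    (h₁ _ _).2 (broadHom_imageRel_of_comp hψ (broadHom_imageRel d₁) zs z ((h₂ _ _).1 h))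
  refine ⟨θ, ⟨⟨hθhom, ψ, hψhom, fun z => ?_, fun z => ?_⟩, funext hθ⟩,
    fun θ' hθ' => hd₁.injective_comp_right (hθ'.2.trans (funext hθ).symm)⟩
  · obtain ⟨x, rfl⟩ := hd₁ z
    rw [hθ, hψ]
  · obtain ⟨x, rfl⟩ := hd₂ z
    rw [hψ, hθ]

/-- Every independent map of forests factors as a degeneracy
followed by a face map, uniquely up to unique isomorphism. -/
theorem stmt11 {X Y : Type u} (r : Rel X) (r' : Rel Y) (φ : X → Y)
    (hF : IsForest r) (hF' : IsForest r')
    (hhom : BroadHom r r' φ) (hind : Independent r r' φ) :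
    (∃ (Z : Type u) (rz : Rel Z) (d : X → Z) (m : Z → Y),
      IsForest rz ∧
      BroadHom r rz d ∧ Independent r rz d ∧ Function.Surjective d ∧
        (∀ l, IsLeaf r l → ¬ rz 0 (d l)) ∧
      BroadHom rz r' m ∧ Independent rz r' m ∧ Function.Injective m ∧
      m ∘ d = φ) ∧
    (∀ (Z₁ Z₂ : Type u) (rz₁ : Rel Z₁) (rz₂ : Rel Z₂)
        (d₁ : X → Z₁) (m₁ : Z₁ → Y) (d₂ : X → Z₂) (m₂ : Z₂ → Y),
      IsForest rz₁ → IsForest rz₂ →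
      BroadHom r rz₁ d₁ → Independent r rz₁ d₁ → Function.Surjective d₁ →
        (∀ l, IsLeaf r l → ¬ rz₁ 0 (d₁ l)) →
      BroadHom rz₁ r' m₁ → Independent rz₁ r' m₁ → Function.Injective m₁ →
      m₁ ∘ d₁ = φ →
      BroadHom r rz₂ d₂ → Independent r rz₂ d₂ → Function.Surjective d₂ →
        (∀ l, IsLeaf r l → ¬ rz₂ 0 (d₂ l)) →
      BroadHom rz₂ r' m₂ → Independent rz₂ r' m₂ → Function.Injective m₂ →
      m₂ ∘ d₂ = φ →
      ∃! θ : Z₁ → Z₂, IsIso rz₁ rz₂ θ ∧ θ ∘ d₁ = d₂ ∧ m₂ ∘ θ = m₁) := by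
  have hφ : IsIndepForestMap r r' φ := ⟨hF, hF', hhom, hind⟩
  have hker : ∀ x x', Set.rangeFactorization φ x = Set.rangeFactorization φ x' ↔ φ x = φ x' :=
    fun _ _ => Subtype.ext_iff
  have hds : Function.Surjective (Set.rangeFactorization φ) := Set.rangeFactorization_surjective
  refine ⟨⟨Set.range φ, imageRel r (Set.rangeFactorization φ), Set.rangeFactorization φ,
    Subtype.val, hφ.isForest_imageRel hker hds, broadHom_imageRel _,
    hφ.independent_imageRel hker hds, hds, fun _ hl => hφ.not_imageRel_zero_of_isLeaf hker hl,
    broadHom_imageRel_of_comp (fun _ => rfl) hhom,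
    hφ.independent_of_imageRel hker hds fun _ => rfl, Subtype.val_injective, rfl⟩, ?_⟩
  intro Z₁ Z₂ rz₁ rz₂ d₁ m₁ d₂ m₂ hFz₁ hFz₂ hd₁ hind₁ hds₁ hleaf₁ _ _ hm₁ hmd₁
    hd₂ hind₂ hds₂ hleaf₂ _ _ hm₂ hmd₂
  have hker₁₂ : ∀ x x', d₁ x = d₁ x' ↔ d₂ x = d₂ x' := fun x x' => by
    rw [← hm₁.eq_iff, ← hm₂.eq_iff, ← Function.comp_apply (f := m₁),
      ← Function.comp_apply (f := m₁), ← Function.comp_apply (f := m₂),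
      ← Function.comp_apply (f := m₂), hmd₁, hmd₂]
  have hd₁' : IsIndepForestMap r rz₁ d₁ := ⟨hF, hFz₁, hd₁, hind₁⟩
  have hd₂' : IsIndepForestMap r rz₂ d₂ := ⟨hF, hFz₂, hd₂, hind₂⟩
  obtain ⟨θ, ⟨hiso, hθd⟩, huniq⟩ := existsUnique_isIso_of_imageRel
    (fun _ _ => hd₁'.rel_iff_imageRel hds₁ hleaf₁) (fun _ _ => hd₂'.rel_iff_imageRel hds₂ hleaf₂)
    hds₁ hds₂ hker₁₂
  refine ⟨θ, ⟨hiso, hθd, hds₁.injective_comp_right ?_⟩, fun θ' hθ' => huniq θ' ⟨hθ'.1, hθ'.2.1⟩⟩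
  change m₂ ∘ (θ ∘ d₁) = m₁ ∘ d₁
  rw [hθd, hmd₁, hmd₂]

end BroadPaper
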